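/- Let A⁰, A¹, v : ℝ³ → ℝ³ be smooth compactly supported vector fields, let φ : ℝ³ → ℝ be smooth and compactly supported, let δt, η ≥ 0, set B⁰ := curl A⁰, B¹ := curl A¹, B^{1/2} := (B⁰ + B¹)/2 and J := curl B^{1/2}, and suppose the implicit midpoint update A¹ = A⁰ + δt·(v × B^{1/2} − ηJ + ∇φ) holds. Then ∫_{ℝ³} A¹ · B¹ dx − ∫_{ℝ³} A⁰ · B⁰ dx = −2δt·η ∫_{ℝ³} J · B^{1/2} dx. In particular, when η = 0 the helicity ∫ A · B dx is exactly preserved by one midpoint time step of the magnetic relaxation algorithm. -/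

import Mathlib

open MeasureTheory Matrix RealInnerProductSpace

noncomputable section

/-- Points/vectors in ℝ³. -/
abbrev V3 : Type := Fin 3 → ℝ

/-- Partial derivative ∂ᵢ of a scalar function on ℝ³. -/
def pder (i : Fin 3) (f : V3 → ℝ) (x : V3) : ℝ :=
  fderiv ℝ f x (Pi.single i 1)

/-- Gradient of a scalar function on ℝ³. -/
def grad (f : V3 → ℝ) (x : V3) : V3 :=
  fun i => pder i f x

/-- Curl of a vector field on ℝ³. -/
def curl (F : V3 → V3) (x : V3) : V3 :=
  ![pder 1 (fun y => F y 2) x - pder 2 (fun y => F y 1) x,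
    pder 2 (fun y => F y 0) x - pder 0 (fun y => F y 2) x,
    pder 0 (fun y => F y 1) x - pder 1 (fun y => F y 0) x]

/-- Divergence of a vector field on ℝ³. -/
def dvg (F : V3 → V3) (x : V3) : ℝ :=
  pder 0 (fun y => F y 0) x + pder 1 (fun y => F y 1) x + pder 2 (fun y => F y 2) x

/-- Cross product on ℝ³. -/
def cross (a b : V3) : V3 :=
  ![a 1 * b 2 - a 2 * b 1, a 2 * b 0 - a 0 * b 2, a 0 * b 1 - a 1 * b 0]

/-- Euclidean dot product on ℝ³. -/
def dot (a b : V3) : ℝ := ∑ i, a i * b i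

/-- Jacobian matrix (DΦ(x))ᵢⱼ = ∂Φᵢ/∂xⱼ. -/
def jac (Φ : V3 → V3) (x : V3) : Matrix (Fin 3) (Fin 3) ℝ :=
  Matrix.of fun i j => pder j (fun y => Φ y i) x

/-! ### Auxiliary lemmas -/

section Aux

lemma contDiff_comp' {F : V3 → V3} (hF : ContDiff ℝ (⊤ : ℕ∞) F) (i : Fin 3) :
    ContDiff ℝ (⊤ : ℕ∞) (fun y => F y i) := contDiff_pi.1 hF i

lemma contDiff_pder {f : V3 → ℝ} (hf : ContDiff ℝ (⊤ : ℕ∞) f) (i : Fin 3) :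
    ContDiff ℝ (⊤ : ℕ∞) (pder i f) := by
  have h1 : ContDiff ℝ (⊤ : ℕ∞) (fderiv ℝ f) := hf.fderiv_right (by simp)
  exact (ContinuousLinearMap.apply ℝ ℝ (Pi.single i 1)).contDiff.comp h1

lemma diffAt_of_smooth {f : V3 → ℝ} (hf : ContDiff ℝ (⊤ : ℕ∞) f) (x : V3) :
    DifferentiableAt ℝ f x := (hf.differentiable (by simp)) x

lemma pder_add {f g : V3 → ℝ} {x : V3} (hf : DifferentiableAt ℝ f x)
    (hg : DifferentiableAt ℝ g x) (i : Fin 3) :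
    pder i (fun y => f y + g y) x = pder i f x + pder i g x := by
  simp [pder, fderiv_fun_add hf hg]

lemma pder_sub {f g : V3 → ℝ} {x : V3} (hf : DifferentiableAt ℝ f x)
    (hg : DifferentiableAt ℝ g x) (i : Fin 3) :
    pder i (fun y => f y - g y) x = pder i f x - pder i g x := by
  simp [pder, fderiv_fun_sub hf hg]

lemma pder_mul {f g : V3 → ℝ} {x : V3} (hf : DifferentiableAt ℝ f x)
    (hg : DifferentiableAt ℝ g x) (i : Fin 3) :
    pder i (fun y => f y * g y) x = pder i f x * g x + f x * pder i g x := by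
  simp [pder, fderiv_fun_mul hf hg]; ring

lemma pder_const_mul {f : V3 → ℝ} {x : V3} (hf : DifferentiableAt ℝ f x) (c : ℝ) (i : Fin 3) :
    pder i (fun y => c * f y) x = c * pder i f x := by
  simp [pder, fderiv_const_mul hf]

lemma pder_pder {f : V3 → ℝ} (hf : ContDiff ℝ (⊤ : ℕ∞) f) (i j : Fin 3) (x : V3) :
    pder i (pder j f) x = fderiv ℝ (fderiv ℝ f) x (Pi.single i 1) (Pi.single j 1) := by
  have hd : DifferentiableAt ℝ (fderiv ℝ f) x :=
    ((hf.fderiv_right (m := (⊤ : ℕ∞)) (by simp)).differentiable (by simp)) x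
  have h2 : pder i (pder j f) x
      = fderiv ℝ (fun y => (fderiv ℝ f y) (Pi.single j (1:ℝ))) x (Pi.single i 1) := rfl
  rw [h2, fderiv_clm_apply hd (differentiableAt_const _)]
  simp

lemma pder_comm {f : V3 → ℝ} (hf : ContDiff ℝ (⊤ : ℕ∞) f) (i j : Fin 3) (x : V3) :
    pder i (pder j f) x = pder j (pder i f) x := by
  rw [pder_pder hf, pder_pder hf]
  exact (hf.contDiffAt.isSymmSndFDerivAt (by rw [minSmoothness_of_isRCLikeNormedField]; exact WithTop.coe_le_coe.mpr le_top)) _ _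

lemma hcs_pder {f : V3 → ℝ} (hs : HasCompactSupport f) (i : Fin 3) :
    HasCompactSupport (pder i f) := hs.fderiv_apply ℝ (Pi.single i 1)

lemma hcs_comp' {F : V3 → V3} (hs : HasCompactSupport F) (i : Fin 3) :
    HasCompactSupport (fun y => F y i) :=
  hs.comp_left (g := fun w : V3 => w i) rfl

lemma integrable_ccs {f : V3 → ℝ} (hf : Continuous f) (hs : HasCompactSupport f) :
    Integrable f := hf.integrable_of_hasCompactSupport hs

/-- Integral of a partial derivative of a smooth compactly supported function vanishes. -/
lemma integral_pder_eq_zero {f : V3 → ℝ} (hf : ContDiff ℝ (⊤ : ℕ∞) f) (hs : HasCompactSupport f)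
    (i : Fin 3) : ∫ x : V3, pder i f x = 0 := by
  have hdiff : Differentiable ℝ f := hf.differentiable (by simp)
  have hint1 : Integrable
      (fun x : V3 => fderiv ℝ f x (Pi.single i 1) * (fun _ : V3 => (1:ℝ)) x) := by
    simpa using integrable_ccs
      ((((hf.fderiv_right (m := (⊤ : ℕ∞)) (by simp)).continuous)).clm_apply continuous_const)
      (hcs_pder hs i)
  have h := integral_mul_fderiv_eq_neg_fderiv_mul_of_integrable (μ := volume)
      (f := f) (g := fun _ : V3 => (1:ℝ)) (v := Pi.single i 1)
      hint1 (by simp) (by simpa using integrable_ccs (hf.continuous) hs)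
      (fun x _ => hdiff x) (fun x _ => differentiable_const _ x)
  simp only [fderiv_const, fderiv_const_apply, Pi.zero_apply, ContinuousLinearMap.zero_apply, mul_zero,
    integral_zero, mul_one] at h
  simpa [pder] using (neg_eq_zero.mp h.symm)

/-- Smoothness of curl. -/
lemma contDiff_curl {F : V3 → V3} (hF : ContDiff ℝ (⊤ : ℕ∞) F) :
    ContDiff ℝ (⊤ : ℕ∞) (fun y => curl F y) := by
  apply contDiff_pi.2
  intro i
  fin_cases i <;>
    simp only [curl, Matrix.cons_val_zero, Matrix.cons_val_one, Matrix.head_cons,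
      Matrix.cons_val_two, Matrix.tail_cons, Fin.isValue] <;>
    exact (contDiff_pder (contDiff_comp' hF _) _).sub (contDiff_pder (contDiff_comp' hF _) _)

/-- Smoothness of cross. -/
lemma contDiff_cross {F G : V3 → V3} (hF : ContDiff ℝ (⊤ : ℕ∞) F) (hG : ContDiff ℝ (⊤ : ℕ∞) G) :
    ContDiff ℝ (⊤ : ℕ∞) (fun y => cross (F y) (G y)) := by
  apply contDiff_pi.2
  intro i
  fin_cases i <;>
    simp only [cross, Matrix.cons_val_zero, Matrix.cons_val_one, Matrix.head_cons,
      Matrix.cons_val_two, Matrix.tail_cons, Fin.isValue] <;>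
    exact ((contDiff_comp' hF _).mul (contDiff_comp' hG _)).sub
      ((contDiff_comp' hF _).mul (contDiff_comp' hG _))

lemma contDiff_dot {F G : V3 → V3} (hF : ContDiff ℝ (⊤ : ℕ∞) F) (hG : ContDiff ℝ (⊤ : ℕ∞) G) :
    ContDiff ℝ (⊤ : ℕ∞) (fun y => dot (F y) (G y)) := by
  simp only [dot]
  exact ContDiff.sum fun i _ => (contDiff_comp' hF i).mul (contDiff_comp' hG i)

/-- divergence of a cross product. -/
lemma dvg_cross {F G : V3 → V3} (hF : ContDiff ℝ (⊤ : ℕ∞) F) (hG : ContDiff ℝ (⊤ : ℕ∞) G) (x : V3) :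
    dvg (fun y => cross (F y) (G y)) x
      = dot (G x) (curl F x) - dot (F x) (curl G x) := by
  have dF : ∀ (i : Fin 3) (y : V3), DifferentiableAt ℝ (fun z => F z i) y :=
    fun i y => diffAt_of_smooth (contDiff_comp' hF i) y
  have dG : ∀ (i : Fin 3) (y : V3), DifferentiableAt ℝ (fun z => G z i) y :=
    fun i y => diffAt_of_smooth (contDiff_comp' hG i) y
  simp only [dvg, cross, Matrix.cons_val_zero, Matrix.cons_val_one, Matrix.head_cons,
    Matrix.cons_val_two, Matrix.tail_cons, Fin.isValue]
  rw [pder_sub ((dF 1 x).fun_mul (dG 2 x)) ((dF 2 x).fun_mul (dG 1 x)),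
      pder_sub ((dF 2 x).fun_mul (dG 0 x)) ((dF 0 x).fun_mul (dG 2 x)),
      pder_sub ((dF 0 x).fun_mul (dG 1 x)) ((dF 1 x).fun_mul (dG 0 x)),
      pder_mul (dF 1 x) (dG 2 x), pder_mul (dF 2 x) (dG 1 x),
      pder_mul (dF 2 x) (dG 0 x), pder_mul (dF 0 x) (dG 2 x),
      pder_mul (dF 0 x) (dG 1 x), pder_mul (dF 1 x) (dG 0 x)]
  simp only [dot, curl, Fin.sum_univ_three, Matrix.cons_val_zero, Matrix.cons_val_one,
    Matrix.head_cons, Matrix.cons_val_two, Matrix.tail_cons, Fin.isValue]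
  ring

/-- divergence of a scalar multiple. -/
lemma dvg_smulf {f : V3 → ℝ} {F : V3 → V3} (hf : ContDiff ℝ (⊤ : ℕ∞) f) (hF : ContDiff ℝ (⊤ : ℕ∞) F)
    (x : V3) :
    dvg (fun y => f y • F y) x = dot (grad f x) (F x) + f x * dvg F x := by
  have dF : ∀ (i : Fin 3) (y : V3), DifferentiableAt ℝ (fun z => F z i) y :=
    fun i y => diffAt_of_smooth (contDiff_comp' hF i) y
  have df : ∀ y : V3, DifferentiableAt ℝ f y := diffAt_of_smooth hf
  simp only [dvg, Pi.smul_apply, smul_eq_mul]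
  rw [pder_mul (df x) (dF 0 x), pder_mul (df x) (dF 1 x), pder_mul (df x) (dF 2 x)]
  simp only [dot, grad, Fin.sum_univ_three]
  ring

/-- divergence of a curl is zero. -/
lemma dvg_curl_eq_zero {F : V3 → V3} (hF : ContDiff ℝ (⊤ : ℕ∞) F) (x : V3) :
    dvg (fun y => curl F y) x = 0 := by
  have hc : ∀ (i : Fin 3) (j : Fin 3) (y : V3),
      DifferentiableAt ℝ (pder i (fun z => F z j)) y :=
    fun i j y => diffAt_of_smooth (contDiff_pder (contDiff_comp' hF j) i) y
  simp only [dvg, curl, Matrix.cons_val_zero, Matrix.cons_val_one, Matrix.head_cons,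
    Matrix.cons_val_two, Matrix.tail_cons, Fin.isValue]
  rw [pder_sub (hc 1 2 x) (hc 2 1 x), pder_sub (hc 2 0 x) (hc 0 2 x),
      pder_sub (hc 0 1 x) (hc 1 0 x)]
  rw [pder_comm (contDiff_comp' hF 2) 0 1, pder_comm (contDiff_comp' hF 1) 0 2,
      pder_comm (contDiff_comp' hF 0) 1 2]
  ring

lemma v3_ext {a b : V3} (h0 : a 0 = b 0) (h1 : a 1 = b 1) (h2 : a 2 = b 2) : a = b := by
  funext i
  fin_cases i
  · exact h0
  · exact h1
  · exact h2

/-- curl of a difference. -/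
lemma curl_sub {F G : V3 → V3} (hF : ContDiff ℝ (⊤ : ℕ∞) F) (hG : ContDiff ℝ (⊤ : ℕ∞) G) (x : V3) :
    curl (fun y => F y - G y) x = curl F x - curl G x := by
  have dF : ∀ (i : Fin 3) (y : V3), DifferentiableAt ℝ (fun z => F z i) y :=
    fun i y => diffAt_of_smooth (contDiff_comp' hF i) y
  have dG : ∀ (i : Fin 3) (y : V3), DifferentiableAt ℝ (fun z => G z i) y :=
    fun i y => diffAt_of_smooth (contDiff_comp' hG i) y
  have key : ∀ (j i : Fin 3), pder i (fun y => F y j - G y j) x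
      = pder i (fun z => F z j) x - pder i (fun z => G z j) x :=
    fun j i => pder_sub (dF j x) (dG j x) i
  refine v3_ext ?_ ?_ ?_
  · show pder 1 (fun y => F y 2 - G y 2) x - pder 2 (fun y => F y 1 - G y 1) x
      = (pder 1 (fun y => F y 2) x - pder 2 (fun y => F y 1) x)
        - (pder 1 (fun y => G y 2) x - pder 2 (fun y => G y 1) x)
    rw [key, key]; ring
  · show pder 2 (fun y => F y 0 - G y 0) x - pder 0 (fun y => F y 2 - G y 2) x
      = (pder 2 (fun y => F y 0) x - pder 0 (fun y => F y 2) x)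
        - (pder 2 (fun y => G y 0) x - pder 0 (fun y => G y 2) x)
    rw [key, key]; ring
  · show pder 0 (fun y => F y 1 - G y 1) x - pder 1 (fun y => F y 0 - G y 0) x
      = (pder 0 (fun y => F y 1) x - pder 1 (fun y => F y 0) x)
        - (pder 0 (fun y => G y 1) x - pder 1 (fun y => G y 0) x)
    rw [key, key]; ring

/-- curl of half a sum. -/
lemma curl_half_add {F G : V3 → V3} (hF : ContDiff ℝ (⊤ : ℕ∞) F) (hG : ContDiff ℝ (⊤ : ℕ∞) G) (x : V3) :
    curl (fun y => (1 / 2 : ℝ) • (F y + G y)) x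
      = (1 / 2 : ℝ) • (curl F x + curl G x) := by
  have dF : ∀ (i : Fin 3) (y : V3), DifferentiableAt ℝ (fun z => F z i) y :=
    fun i y => diffAt_of_smooth (contDiff_comp' hF i) y
  have dG : ∀ (i : Fin 3) (y : V3), DifferentiableAt ℝ (fun z => G z i) y :=
    fun i y => diffAt_of_smooth (contDiff_comp' hG i) y
  have key : ∀ (j i : Fin 3), pder i (fun y => (1 / 2 : ℝ) * (F y j + G y j)) x
      = (1 / 2 : ℝ) * (pder i (fun z => F z j) x + pder i (fun z => G z j) x) := by
    intro j i
    rw [pder_const_mul ((dF j x).fun_add (dG j x)), pder_add (dF j x) (dG j x)]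
  refine v3_ext ?_ ?_ ?_
  · show pder 1 (fun y => (1 / 2 : ℝ) * (F y 2 + G y 2)) x
        - pder 2 (fun y => (1 / 2 : ℝ) * (F y 1 + G y 1)) x
      = (1 / 2 : ℝ) * ((pder 1 (fun y => F y 2) x - pder 2 (fun y => F y 1) x)
        + (pder 1 (fun y => G y 2) x - pder 2 (fun y => G y 1) x))
    rw [key, key]; ring
  · show pder 2 (fun y => (1 / 2 : ℝ) * (F y 0 + G y 0)) x
        - pder 0 (fun y => (1 / 2 : ℝ) * (F y 2 + G y 2)) x
      = (1 / 2 : ℝ) * ((pder 2 (fun y => F y 0) x - pder 0 (fun y => F y 2) x)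
        + (pder 2 (fun y => G y 0) x - pder 0 (fun y => G y 2) x))
    rw [key, key]; ring
  · show pder 0 (fun y => (1 / 2 : ℝ) * (F y 1 + G y 1)) x
        - pder 1 (fun y => (1 / 2 : ℝ) * (F y 0 + G y 0)) x
      = (1 / 2 : ℝ) * ((pder 0 (fun y => F y 1) x - pder 1 (fun y => F y 0) x)
        + (pder 0 (fun y => G y 1) x - pder 1 (fun y => G y 0) x))
    rw [key, key]; ring

/-- divergence is additive. -/
lemma dvg_add {F G : V3 → V3} (hF : ContDiff ℝ (⊤ : ℕ∞) F) (hG : ContDiff ℝ (⊤ : ℕ∞) G) (x : V3) :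
    dvg (fun y => F y + G y) x = dvg F x + dvg G x := by
  have dF : ∀ (i : Fin 3) (y : V3), DifferentiableAt ℝ (fun z => F z i) y :=
    fun i y => diffAt_of_smooth (contDiff_comp' hF i) y
  have dG : ∀ (i : Fin 3) (y : V3), DifferentiableAt ℝ (fun z => G z i) y :=
    fun i y => diffAt_of_smooth (contDiff_comp' hG i) y
  simp only [dvg, Pi.add_apply]
  rw [pder_add (dF 0 x) (dG 0 x), pder_add (dF 1 x) (dG 1 x), pder_add (dF 2 x) (dG 2 x)]
  ring

/-- divergence of a constant scalar multiple. -/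
lemma dvg_const_smul {F : V3 → V3} (hF : ContDiff ℝ (⊤ : ℕ∞) F) (c : ℝ) (x : V3) :
    dvg (fun y => c • F y) x = c * dvg F x := by
  have dF : ∀ (i : Fin 3) (y : V3), DifferentiableAt ℝ (fun z => F z i) y :=
    fun i y => diffAt_of_smooth (contDiff_comp' hF i) y
  simp only [dvg, Pi.smul_apply, smul_eq_mul]
  rw [pder_const_mul (dF 0 x), pder_const_mul (dF 1 x), pder_const_mul (dF 2 x)]
  ring


lemma hcs_add' {f g : V3 → ℝ} (hf : HasCompactSupport f) (hg : HasCompactSupport g) :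
    HasCompactSupport (fun y => f y + g y) := hf.add hg

lemma hcs_neg' {f : V3 → ℝ} (hf : HasCompactSupport f) :
    HasCompactSupport (fun y => -(f y)) := hf.comp_left (g := Neg.neg) neg_zero

lemma hcs_sub' {f g : V3 → ℝ} (hf : HasCompactSupport f) (hg : HasCompactSupport g) :
    HasCompactSupport (fun y => f y - g y) := by
  have h : (fun y => f y - g y) = fun y => f y + (-(g y)) := by funext y; ring
  rw [h]; exact hcs_add' hf (hcs_neg' hg)

lemma hcs_mul_l {f g : V3 → ℝ} (hf : HasCompactSupport f) :
    HasCompactSupport (fun y => f y * g y) := hf.mul_right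

lemma hcs_mul_r {f g : V3 → ℝ} (hg : HasCompactSupport g) :
    HasCompactSupport (fun y => f y * g y) := hg.mul_left

lemma hcs_curl_comp {F : V3 → V3} (hs : HasCompactSupport F) (i : Fin 3) :
    HasCompactSupport (fun y => curl F y i) := by
  fin_cases i
  · show HasCompactSupport
      (fun y => pder 1 (fun z => F z 2) y - pder 2 (fun z => F z 1) y)
    exact hcs_sub' (hcs_pder (hcs_comp' hs 2) 1) (hcs_pder (hcs_comp' hs 1) 2)
  · show HasCompactSupport
      (fun y => pder 2 (fun z => F z 0) y - pder 0 (fun z => F z 2) y)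
    exact hcs_sub' (hcs_pder (hcs_comp' hs 0) 2) (hcs_pder (hcs_comp' hs 2) 0)
  · show HasCompactSupport
      (fun y => pder 0 (fun z => F z 1) y - pder 1 (fun z => F z 0) y)
    exact hcs_sub' (hcs_pder (hcs_comp' hs 1) 0) (hcs_pder (hcs_comp' hs 0) 1)

lemma hcs_dot_r {F G : V3 → V3} (hG : ∀ i, HasCompactSupport (fun y => G y i)) :
    HasCompactSupport (fun y => dot (F y) (G y)) := by
  have h : (fun y => dot (F y) (G y))
      = fun y => (F y 0 * G y 0 + F y 1 * G y 1) + F y 2 * G y 2 := by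
    funext y; simp [dot, Fin.sum_univ_three]
  rw [h]
  exact hcs_add' (hcs_add' (hcs_mul_r (hG 0)) (hcs_mul_r (hG 1))) (hcs_mul_r (hG 2))

lemma hcs_dot_l {F G : V3 → V3} (hF : ∀ i, HasCompactSupport (fun y => F y i)) :
    HasCompactSupport (fun y => dot (F y) (G y)) := by
  have h : (fun y => dot (F y) (G y))
      = fun y => (F y 0 * G y 0 + F y 1 * G y 1) + F y 2 * G y 2 := by
    funext y; simp [dot, Fin.sum_univ_three]
  rw [h]
  exact hcs_add' (hcs_add' (hcs_mul_l (hF 0)) (hcs_mul_l (hF 1))) (hcs_mul_l (hF 2))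

end Aux

/-- exact discrete helicity balance for one implicit midpoint
time step of the magnetic relaxation algorithm; when η = 0 helicity is
preserved exactly. -/
theorem discrete_helicity_balance
    (A₀ A₁ v : V3 → V3) (φ : V3 → ℝ) (δt η : ℝ) (hδt : 0 ≤ δt) (hη : 0 ≤ η)
    (hA₀ : ContDiff ℝ (⊤ : ℕ∞) A₀) (hA₁ : ContDiff ℝ (⊤ : ℕ∞) A₁) (hv : ContDiff ℝ (⊤ : ℕ∞) v)
    (hφ : ContDiff ℝ (⊤ : ℕ∞) φ)
    (hsA₀ : HasCompactSupport A₀) (hsA₁ : HasCompactSupport A₁)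
    (hsv : HasCompactSupport v) (hsφ : HasCompactSupport φ)
    (B₀ B₁ Bh J : V3 → V3)
    (hB₀ : B₀ = fun y => curl A₀ y)
    (hB₁ : B₁ = fun y => curl A₁ y)
    (hBh : Bh = fun y => (1 / 2 : ℝ) • (B₀ y + B₁ y))
    (hJ : J = fun y => curl Bh y)
    (hupdate : A₁ = fun y => A₀ y + δt • (cross (v y) (Bh y) - η • J y + grad φ y)) :
    (∫ x : V3, dot (A₁ x) (B₁ x)) - (∫ x : V3, dot (A₀ x) (B₀ x))
      = -2 * δt * η * (∫ x : V3, dot (J x) (Bh x)) := by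
  classical
  -- local abbreviations
  set Ah : V3 → V3 := fun y => (1 / 2 : ℝ) • (A₀ y + A₁ y) with hAh
  set D : V3 → V3 := fun y => A₁ y - A₀ y with hD
  -- smoothness facts
  have sB₀ : ContDiff ℝ (⊤ : ℕ∞) B₀ := by rw [hB₀]; exact contDiff_curl hA₀
  have sB₁ : ContDiff ℝ (⊤ : ℕ∞) B₁ := by rw [hB₁]; exact contDiff_curl hA₁
  have sBh : ContDiff ℝ (⊤ : ℕ∞) Bh := by
    rw [hBh]; exact (contDiff_const (c := (1 / 2 : ℝ))).smul (sB₀.add sB₁)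
  have sJ : ContDiff ℝ (⊤ : ℕ∞) J := by rw [hJ]; exact contDiff_curl sBh
  have sAh : ContDiff ℝ (⊤ : ℕ∞) Ah := by
    rw [hAh]; exact (contDiff_const (c := (1 / 2 : ℝ))).smul (hA₀.add hA₁)
  have sD : ContDiff ℝ (⊤ : ℕ∞) D := by rw [hD]; exact hA₁.sub hA₀
  set W : V3 → V3 := fun y => cross (D y) (Ah y) + (2 * δt) • (φ y • Bh y) with hW
  have sW : ContDiff ℝ (⊤ : ℕ∞) W := by
    rw [hW]; exact (contDiff_cross sD sAh).add ((contDiff_const (c := 2 * δt)).smul (hφ.smul sBh))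
  -- Bh is the curl of Ah
  have hBhAh : Bh = fun y => curl Ah y := by
    funext y
    rw [hAh, curl_half_add hA₀ hA₁ y]
    simp only [hBh, hB₀, hB₁]
  -- the update written as a formula for D
  have hDx : ∀ x : V3, D x = δt • (cross (v x) (Bh x) - η • J x + grad φ x) := by
    intro x
    rw [hD]
    show A₁ x - A₀ x = _
    rw [hupdate]
    simp
  -- pointwise identities
  have e1 : ∀ x : V3, dvg W x = (dot (Ah x) (B₁ x - B₀ x) - dot (D x) (Bh x))
      + 2 * δt * dot (grad φ x) (Bh x) := by
    intro x
    have h1 : dvg W x = dvg (fun y => cross (D y) (Ah y)) x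
        + dvg (fun y => (2 * δt) • (φ y • Bh y)) x := by
      rw [hW]
      exact dvg_add (contDiff_cross sD sAh) ((contDiff_const (c := 2 * δt)).smul (hφ.smul sBh)) x
    rw [h1, dvg_const_smul (F := fun y => φ y • Bh y) (hφ.smul sBh) (2 * δt) x, dvg_smulf hφ sBh x,
        dvg_cross sD sAh x]
    have hcurlD : curl D x = B₁ x - B₀ x := by
      rw [hD, curl_sub hA₁ hA₀ x]
      simp only [hB₁, hB₀]
    have hcurlAh : curl Ah x = Bh x := by
      rw [hAh, curl_half_add hA₀ hA₁ x]
      simp only [hBh, hB₀, hB₁]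
    have hdvgBh : dvg Bh x = 0 := by
      rw [hBhAh]; exact dvg_curl_eq_zero sAh x
    rw [hcurlD, hcurlAh, hdvgBh]
    ring
  have e2 : ∀ x : V3, dot (D x) (Bh x)
      = δt * (-(η * dot (J x) (Bh x)) + dot (grad φ x) (Bh x)) := by
    intro x
    rw [hDx x]
    simp only [dot, Fin.sum_univ_three, Pi.smul_apply, Pi.add_apply, Pi.sub_apply,
      smul_eq_mul, cross, grad, Matrix.cons_val_zero, Matrix.cons_val_one, Matrix.head_cons,
      Matrix.cons_val_two, Matrix.tail_cons]
    ring
  have e3 : ∀ x : V3, dot (A₁ x) (B₁ x) - dot (A₀ x) (B₀ x)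
      = dot (Ah x) (B₁ x - B₀ x) + dot (D x) (Bh x) := by
    intro x
    simp only [hAh, hD, hBh, dot, Fin.sum_univ_three, Pi.smul_apply, Pi.add_apply,
      Pi.sub_apply, smul_eq_mul]
    ring
  have key : ∀ x : V3, dot (A₁ x) (B₁ x) - dot (A₀ x) (B₀ x)
      = -2 * δt * η * dot (J x) (Bh x) + dvg W x := by
    intro x
    linear_combination e3 x - e1 x + 2 * e2 x
  -- compact support facts
  have csBh : ∀ i, HasCompactSupport (fun y => Bh y i) := by
    intro i
    have h : (fun y => Bh y i) = fun y => (1 / 2 : ℝ) * (curl A₀ y i + curl A₁ y i) := by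
      funext y; simp [hBh, hB₀, hB₁]; ring
    rw [h]
    have := hcs_add' (hcs_curl_comp hsA₀ i) (hcs_curl_comp hsA₁ i)
    exact (hcs_mul_r (g := fun y => curl A₀ y i + curl A₁ y i) this)
  have csD : ∀ i, HasCompactSupport (fun y => D y i) := by
    intro i
    have h : (fun y => D y i) = fun y => A₁ y i - A₀ y i := by funext y; simp [hD]
    rw [h]
    exact hcs_sub' (hcs_comp' hsA₁ i) (hcs_comp' hsA₀ i)
  have csW : ∀ i : Fin 3, HasCompactSupport (fun y => W y i) := by
    intro i
    have h : (fun y => W y i) = fun y => cross (D y) (Ah y) i + 2 * δt * (φ y * Bh y i) := by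
      funext y; simp [hW, mul_assoc]
    rw [h]
    refine hcs_add' ?_ ?_
    · fin_cases i
      · show HasCompactSupport (fun y => D y 1 * Ah y 2 - D y 2 * Ah y 1)
        exact hcs_sub' (hcs_mul_l (csD 1)) (hcs_mul_l (csD 2))
      · show HasCompactSupport (fun y => D y 2 * Ah y 0 - D y 0 * Ah y 2)
        exact hcs_sub' (hcs_mul_l (csD 2)) (hcs_mul_l (csD 0))
      · show HasCompactSupport (fun y => D y 0 * Ah y 1 - D y 1 * Ah y 0)
        exact hcs_sub' (hcs_mul_l (csD 0)) (hcs_mul_l (csD 1))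
    · exact hcs_mul_r (hcs_mul_l hsφ)
  have cs1 : HasCompactSupport (fun x => dot (A₁ x) (B₁ x)) :=
    hcs_dot_l (fun i => hcs_comp' hsA₁ i)
  have cs0 : HasCompactSupport (fun x => dot (A₀ x) (B₀ x)) :=
    hcs_dot_l (fun i => hcs_comp' hsA₀ i)
  have csJ : HasCompactSupport (fun x => dot (J x) (Bh x)) := hcs_dot_r csBh
  -- integrability facts
  have I1 : Integrable (fun x : V3 => dot (A₁ x) (B₁ x)) :=
    integrable_ccs (contDiff_dot hA₁ sB₁).continuous cs1
  have I0 : Integrable (fun x : V3 => dot (A₀ x) (B₀ x)) :=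
    integrable_ccs (contDiff_dot hA₀ sB₀).continuous cs0
  have IJ : Integrable (fun x : V3 => dot (J x) (Bh x)) :=
    integrable_ccs (contDiff_dot sJ sBh).continuous csJ
  have hWd : ∀ i : Fin 3, ContDiff ℝ (⊤ : ℕ∞) (fun y => W y i) := fun i => contDiff_comp' sW i
  have IWp : ∀ i : Fin 3, Integrable (fun x : V3 => pder i (fun y => W y i) x) :=
    fun i => integrable_ccs (contDiff_pder (hWd i) i).continuous (hcs_pder (csW i) i)
  have hdvgW_eq : (fun x : V3 => dvg W x) = fun x =>
      (pder 0 (fun y => W y 0) x + pder 1 (fun y => W y 1) x) + pder 2 (fun y => W y 2) x := by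
    funext x; rw [dvg]
  have IW : Integrable (fun x : V3 => dvg W x) := by
    rw [hdvgW_eq]
    exact ((IWp 0).add (IWp 1)).add (IWp 2)
  have I01 : Integrable (fun x : V3 => pder 0 (fun y => W y 0) x + pder 1 (fun y => W y 1) x)
      volume := (IWp 0).add (IWp 1)
  have hIdvgW : ∫ x : V3, dvg W x = 0 := by
    rw [hdvgW_eq, integral_add I01 (IWp 2), integral_add (IWp 0) (IWp 1),
      integral_pder_eq_zero (hWd 0) (csW 0) 0, integral_pder_eq_zero (hWd 1) (csW 1) 1,
      integral_pder_eq_zero (hWd 2) (csW 2) 2]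
    norm_num
  -- conclusion
  rw [← integral_sub I1 I0]
  have hfun : (fun x : V3 => dot (A₁ x) (B₁ x) - dot (A₀ x) (B₀ x))
      = fun x => -2 * δt * η * dot (J x) (Bh x) + dvg W x := funext key
  rw [hfun, integral_add (IJ.const_mul (-2 * δt * η)) IW, integral_const_mul, hIdvgW,
    add_zero]


end
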